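/- arXiv:1410.7031 — 6 statements merged into one kernel-verified Lean document; each statement's English description precedes it below -/
import Mathlib

section
/- Let p be an odd prime and R(X) = a₀X with a₀ ≠ 0. If a ∈ k*, c ∈ k, d ∈ F_p* and there exists g(X) ∈ k[X] with (aX+c)R(aX+c) − d·XR(X) = g(X)^p − g(X), then c = 0 and d = a². -/
/-!
Expanding the left-hand side gives the quadratic
`a₀(a² - d)X² + 2a₀acX + a₀c²`. Since `p ≥ 3`, a nonconstant `g` would make `g ^ p - g` of degree
at least `p`, so `g` is constant; comparing the coefficients of `X²` and `X` then gives `d = a²`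
and, as `2 ≠ 0` in odd characteristic, `c = 0`.
-/

open Polynomial

theorem Polynomial.natDegree_eq_zero_of_natDegree_pow_sub_self_lt {R : Type*} [CommRing R]
    [NoZeroDivisors R] {p : ℕ} (hp : 1 < p) {g : R[X]} (h : (g ^ p - g).natDegree < p) :
    g.natDegree = 0 := by
  by_contra hg
  have hlt : g.natDegree < (g ^ p).natDegree := by
    rw [natDegree_pow]
    exact lt_mul_left (Nat.pos_of_ne_zero hg) hp
  rw [natDegree_sub_eq_left_of_natDegree_lt hlt, natDegree_pow] at h
  exact absurd h (not_lt.mpr (Nat.le_mul_of_pos_right p (Nat.pos_of_ne_zero hg)))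

theorem Polynomial.linear_mul_comp_sub_eq_quadratic {R : Type*} [CommRing R] (a₀ a c d : R) :
    (C a * X + C c) * (C a₀ * X).comp (C a * X + C c) - C d * (X * (C a₀ * X))
      = C (a₀ * (a ^ 2 - d)) * X ^ 2 + C (2 * a₀ * a * c) * X + C (a₀ * c ^ 2) := by
  simp only [mul_comp, C_comp, X_comp, map_mul, map_sub, map_pow, map_ofNat]
  ring

theorem S_XRX_case_h_zero_general (p : ℕ) [Fact p.Prime] (hodd : Odd p)
    (k : Type*) [Field k] [CharP k p]
    (a₀ : k) (ha₀ : a₀ ≠ 0)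
    (R : Polynomial k) (hR : R = Polynomial.C a₀ * Polynomial.X)
    (a c : k) (ha : a ≠ 0) (d : ZMod p)
    (g : Polynomial k)
    (hg : ((Polynomial.C a * Polynomial.X + Polynomial.C c) *
            R.comp (Polynomial.C a * Polynomial.X + Polynomial.C c)) -
          Polynomial.C (ZMod.castHom (dvd_refl p) k d) * (Polynomial.X * R) = g ^ p - g) :
    c = 0 ∧ (ZMod.castHom (dvd_refl p) k d : k) = a ^ 2 := by
  subst hR
  rw [linear_mul_comp_sub_eq_quadratic] at hg
  have hp : 2 < p := lt_of_le_of_ne (Fact.out : p.Prime).two_le fun h => by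
    rw [← h] at hodd; exact absurd hodd (by decide)
  have hg_const : g.natDegree = 0 :=
    natDegree_eq_zero_of_natDegree_pow_sub_self_lt (by omega)
      (hg ▸ natDegree_quadratic_le.trans_lt hp)
  obtain ⟨b, rfl⟩ := natDegree_eq_zero.mp hg_const
  have hX2 := congrArg (coeff · 2) hg
  have hX1 := congrArg (coeff · 1) hg
  simp only [← C_pow, coeff_add, coeff_C_mul, coeff_X_pow, coeff_X, coeff_C, coeff_sub] at hX2 hX1
  norm_num at hX2 hX1
  have h2 : (2 : k) ≠ 0 := Ring.two_ne_zero (by rw [ringChar.eq k p]; omega)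
  refine ⟨?_, ?_⟩
  · simpa [h2, ha₀, ha] using hX1
  · simp only [ha₀, false_or] at hX2
    exact (sub_eq_zero.mp hX2).symm

/-- For `R(X) = a₀X` (case `h = 0`): if `(aX+c)R(aX+c) − d·XR(X) = g(X)^p − g(X)`
for some polynomial `g`, with `a ∈ k*`, `c ∈ k`, `d ∈ F_p*`, then `c = 0` and `d = a²`. -/
theorem S_XRX_case_h_zero (p : ℕ) [Fact p.Prime] (hodd : Odd p)
    (k : Type*) [Field k] [IsAlgClosed k] [CharP k p]
    (a₀ : k) (ha₀ : a₀ ≠ 0)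
    (R : Polynomial k) (hR : R = Polynomial.C a₀ * Polynomial.X)
    (a c : k) (ha : a ≠ 0) (d : ZMod p) (hd : d ≠ 0)
    (g : Polynomial k)
    (hg : ((Polynomial.C a * Polynomial.X + Polynomial.C c) *
            R.comp (Polynomial.C a * Polynomial.X + Polynomial.C c)) -
          Polynomial.C (ZMod.castHom (dvd_refl p) k d) * (Polynomial.X * R) = g ^ p - g) :
    c = 0 ∧ (ZMod.castHom (dvd_refl p) k d : k) = a ^ 2 :=
  S_XRX_case_h_zero_general p hodd k a₀ ha₀ R hR a c ha d g hg
end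

section
/- Let a₁X₁² + ⋯ + aₙXₙ² be a non-degenerate diagonal quadratic form over F_p (p odd, all aᵢ ≠ 0) with n odd. Then the number of zeros (x₁,…,xₙ) ∈ F_pⁿ of the form equals p^{n−1}. -/
/-!
Count the zeros `N` of `Q x = ∑ aᵢ xᵢ²` over `F = 𝔽_q` with a primitive additive character `ψ`:
`N q = ∑_t ∑_x ψ (t Q x)`. The term `t = 0` contributes `qⁿ`. For `t ≠ 0` the inner sum splits
into one-variable sums `∑_y ψ (t aᵢ y²) = χ (t aᵢ) G`, where `χ` is the quadratic character and
`G` the quadratic Gauss sum, so it equals `χ(t)ⁿ ∏ χ(aᵢ) Gⁿ = χ(t) ∏ χ(aᵢ) Gⁿ` as `n` is odd.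
Summing `χ(t)` over `t` gives `0`, hence `N q = qⁿ`.
-/

open Finset

namespace AddChar

variable {A M : Type*} [AddCommMonoid A]

lemma map_sum_eq_prod [CommMonoid M] {ι : Type*} (ψ : AddChar A M) (s : Finset ι) (f : ι → A) :
    ψ (∑ i ∈ s, f i) = ∏ i ∈ s, ψ (f i) := by
  classical
  induction s using Finset.induction with
  | empty => simp
  | insert i s hi ih => rw [sum_insert hi, prod_insert hi, map_add_eq_mul, ih]

lemma sum_pi_map_sum [Fintype A] [CommSemiring M] {ι : Type*} [Fintype ι] [DecidableEq ι]
    (ψ : AddChar A M) (f : ι → A → A) :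
    ∑ x : ι → A, ψ (∑ i, f i (x i)) = ∏ i, ∑ y, ψ (f i y) := by
  simp_rw [map_sum_eq_prod]
  exact (Fintype.prod_sum fun i y => ψ (f i y)).symm

end AddChar

section

variable {F : Type*} [Field F] [Fintype F] [DecidableEq F]
  {R : Type*} [CommRing R] [IsDomain R] {ψ : AddChar F R}

lemma card_zeros_mul_card_eq_sum_addChar {α : Type*} [Fintype α] (hψ : ψ.IsPrimitive)
    (f : α → F) :
    (#{x | f x = 0} : R) * Fintype.card F = ∑ x, ∑ t, ψ (t * f x) := by
  simp_rw [sum_congr rfl fun x _ => AddChar.sum_mulShift (f x) hψ, ← Nat.cast_sum, sum_ite,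
    sum_const_zero, add_zero, sum_const, smul_eq_mul, Nat.cast_mul]

lemma sum_addChar_sq_eq_gaussSum (hF : ringChar F ≠ 2) (hψ : ψ.IsPrimitive) :
    ∑ y, ψ (y ^ 2) = gaussSum ((quadraticChar F).ringHomComp (algebraMap ℤ R)) ψ := by
  have hfiber (u : F) : ∑ y with y ^ 2 = u, ψ (y ^ 2) = (quadraticChar F u + 1 : ℤ) * ψ u := by
    rw [sum_congr rfl fun y hy => by rw [(mem_filter.mp hy).2], sum_const, nsmul_eq_mul,
      ← quadraticChar_card_sqrts hF u, Set.toFinset_ofPred, Int.cast_natCast]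
  have hψsum : ∑ u, ψ u = 0 := by
    simpa [AddChar.mulShift_one] using AddChar.sum_mulShift 1 hψ
  rw [← sum_fiberwise univ (· ^ 2), sum_congr rfl fun u _ => hfiber u]
  simp [add_mul, sum_add_distrib, hψsum, gaussSum]

lemma sum_addChar_mul_sq (hF : ringChar F ≠ 2) (hψ : ψ.IsPrimitive) {c : F} (hc : c ≠ 0) :
    ∑ y, ψ (c * y ^ 2) =
      quadraticChar F c * gaussSum ((quadraticChar F).ringHomComp (algebraMap ℤ R)) ψ := by
  have hψc : (ψ.mulShift c).IsPrimitive := fun a ha => by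
    rw [AddChar.mulShift_mulShift]; exact hψ (mul_ne_zero hc ha)
  have hχ := ((quadraticChar_isQuadratic F).comp (algebraMap ℤ R)).inv
  calc ∑ y, ψ (c * y ^ 2) = gaussSum _ (ψ.mulShift c) := sum_addChar_sq_eq_gaussSum hF hψc
    _ = _ := gaussSum_mulShift_eq _ ψ (Units.mk0 c hc)
    _ = _ := by rw [hχ]; rfl

variable {ι : Type*} [Fintype ι] [DecidableEq ι] {a : ι → F}

lemma sum_addChar_mul_sum_mul_sq_of_ne_zero (hF : ringChar F ≠ 2) (hψ : ψ.IsPrimitive)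
    (ha : ∀ i, a i ≠ 0) (hι : Odd (Fintype.card ι)) {t : F} (ht : t ≠ 0) :
    ∑ x : ι → F, ψ (t * ∑ i, a i * x i ^ 2) =
      quadraticChar F t * ∏ i, (quadraticChar F (a i) *
        gaussSum ((quadraticChar F).ringHomComp (algebraMap ℤ R)) ψ) := by
  have hsplit : ∑ x : ι → F, ψ (t * ∑ i, a i * x i ^ 2) = ∏ i, ∑ y, ψ (t * a i * y ^ 2) := by
    simp_rw [mul_sum, ← mul_assoc]
    exact AddChar.sum_pi_map_sum ψ fun i y => t * a i * y ^ 2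
  have hpow : quadraticChar F t ^ Fintype.card ι = quadraticChar F t := by
    rw [← MulChar.pow_apply' _ hι.pos.ne', (quadraticChar_isQuadratic F).pow_odd hι]
  simp_rw [hsplit, sum_addChar_mul_sq hF hψ (mul_ne_zero ht (ha _)), map_mul, Int.cast_mul,
    mul_assoc, prod_mul_distrib, prod_const, card_univ, ← Int.cast_pow, hpow]

lemma card_zeros_sum_mul_sq_mul_card_eq_pow (hF : ringChar F ≠ 2) (hψ : ψ.IsPrimitive)
    (ha : ∀ i, a i ≠ 0) (hι : Odd (Fintype.card ι)) :
    (#{x : ι → F | ∑ i, a i * x i ^ 2 = 0} : R) * Fintype.card F =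
      Fintype.card F ^ Fintype.card ι := by
  rw [card_zeros_mul_card_eq_sum_addChar hψ, sum_comm, ← add_sum_erase _ _ (mem_univ 0),
    sum_congr rfl fun t ht =>
      sum_addChar_mul_sum_mul_sq_of_ne_zero hF hψ ha hι (ne_of_mem_erase ht),
    ← sum_mul, sum_erase _ (by simp), ← Int.cast_sum, quadraticChar_sum_zero hF]
  simp

end

theorem card_zeros_sum_mul_sq_of_odd_card {F : Type*} [Field F] [Fintype F]
    {ι : Type*} [Fintype ι] {a : ι → F} (hF : ringChar F ≠ 2) (ha : ∀ i, a i ≠ 0)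
    (hι : Odd (Fintype.card ι)) :
    Nat.card {x : ι → F // ∑ i, a i * x i ^ 2 = 0} = Fintype.card F ^ (Fintype.card ι - 1) := by
  classical
  let ψ := AddChar.FiniteField.primitiveChar F ℂ <| by
    rw [ringChar.eq_zero]; exact (CharP.char_ne_zero_of_finite F _).symm
  have key := card_zeros_sum_mul_sq_mul_card_eq_pow hF ψ.prim ha hι
  rw [← Nat.sub_add_cancel hι.pos, pow_succ] at key
  rw [Nat.card_eq_fintype_card, Fintype.card_subtype]
  exact mul_right_cancel₀ Fintype.card_ne_zero (by exact_mod_cast key)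

/-- (Joly) For a non-degenerate diagonal quadratic form `∑ aᵢXᵢ²` over `F_p`, `p` odd,
in an odd number `n` of variables, the number of zeros in `F_pⁿ` is `p^{n−1}`. -/
theorem joly_odd_n (p : ℕ) [Fact p.Prime] (hodd : Odd p)
    (n : ℕ) (hn : Odd n) (a : Fin n → ZMod p) (ha : ∀ i, a i ≠ 0) :
    Nat.card {x : Fin n → ZMod p // ∑ i, a i * (x i) ^ 2 = 0} = p ^ (n - 1) := by
  have hp : ringChar (ZMod p) ≠ 2 := by
    rw [ZMod.ringChar_zmod_n]
    rintro rfl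
    exact Nat.not_odd_iff_even.mpr even_two hodd
  simpa only [ZMod.card, Fintype.card_fin] using
    card_zeros_sum_mul_sq_of_odd_card hp ha (by rwa [Fintype.card_fin])
end

section
/- Let a₁X₁² + ⋯ + aₙXₙ² be a non-degenerate diagonal quadratic form over F_p (p odd) with n even. Then the number of its zeros in F_pⁿ is p^{n−1} + (p^{n/2} − p^{n/2−1}) if (−1)^{n/2}a₁⋯aₙ is a nonzero square in F_p, and p^{n−1} − (p^{n/2} − p^{n/2−1}) otherwise. -/
/-!
Peel off two variables at a time. With `χ` the quadratic character of `F = 𝔽_q`, a Jacobi sum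
computation shows that `b u² + c v² = t` has `q + χ(-bc)(q - 1)` solutions for `t = 0` and
`q - χ(-bc)` otherwise. Summing over the values of the remaining form `Q` in `n` variables gives
`N(Q + bu² + cv²) = q^{n+1} + χ(-bc)(q N(Q) - q^n)`, and by induction
`q N = q^n + χ((-1)^{n/2} a₁⋯aₙ)(q^{n/2+1} - q^{n/2})` for every even `n`.
-/

open Finset

section Convolution

variable {α β M : Type*} [Fintype α] [Finite β] [AddCommGroup M]

lemma Nat.card_add_eq_sum (f : α → M) (g : β → M) (t : M) :
    Nat.card {w : α × β // f w.1 + g w.2 = t} = ∑ x, Nat.card {y // g y = t - f x} := by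
  rw [← Nat.card_sigma]
  refine Nat.card_congr ((Equiv.subtypeEquivRight fun w => ?_).trans
    (Equiv.subtypeProdEquivSigmaSubtype fun x y => g y = t - f x))
  exact eq_sub_iff_add_eq'.symm

lemma Nat.card_add_eq_sum_mul [Fintype M] [DecidableEq M] (f : α → M) (g : β → M) (t : M) :
    Nat.card {w : α × β // f w.1 + g w.2 = t} =
      ∑ r, Nat.card {x // f x = r} * Nat.card {y // g y = t - r} := by
  rw [Nat.card_add_eq_sum, ← Fintype.sum_fiberwise' f fun r => Nat.card {y // g y = t - r}]
  simp [Nat.card_eq_fintype_card]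

end Convolution

section FiniteField

variable {F : Type*} [Field F] [Fintype F] [DecidableEq F]

lemma quadraticChar_inv (b : F) : quadraticChar F b⁻¹ = quadraticChar F b := by
  rw [← MulChar.inv_apply', (quadraticChar_isQuadratic F).inv]

lemma sum_quadraticChar_sq : ∑ r : F, quadraticChar F (r ^ 2) = Fintype.card F - 1 := by
  rw [← Finset.sum_erase_add _ _ (mem_univ 0), zero_pow two_ne_zero, MulChar.map_zero, add_zero,
    Finset.sum_congr rfl fun r hr => quadraticChar_sq_one' (ne_of_mem_erase hr), sum_const,
    card_erase_of_mem (mem_univ 0), card_univ, nsmul_one, Nat.cast_pred Fintype.card_pos]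

lemma card_sq_eq (hF : ringChar F ≠ 2) (c : F) :
    (Nat.card {v : F // v ^ 2 = c} : ℤ) = quadraticChar F c + 1 := by
  rw [← quadraticChar_card_sqrts hF, Set.toFinset_card, Nat.card_eq_fintype_card]
  rfl

lemma card_mul_sq_eq (hF : ringChar F ≠ 2) {b : F} (hb : b ≠ 0) (s : F) :
    (Nat.card {v : F // b * v ^ 2 = s} : ℤ) = quadraticChar F (b * s) + 1 := by
  have e : {v : F // b * v ^ 2 = s} ≃ {v : F // v ^ 2 = b⁻¹ * s} :=
    Equiv.subtypeEquivRight fun v => by rw [eq_inv_mul_iff_mul_eq₀ hb]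
  rw [Nat.card_congr e, card_sq_eq hF, map_mul, quadraticChar_inv, map_mul]

lemma sum_quadraticChar_mul_sub (hF : ringChar F ≠ 2) (t : F) :
    ∑ r, quadraticChar F r * quadraticChar F (t - r) =
      if t = 0 then quadraticChar F (-1) * (Fintype.card F - 1) else -quadraticChar F (-1) := by
  set χ := quadraticChar F
  split_ifs with ht
  · calc ∑ r, χ r * χ (t - r) = ∑ r, χ (-1) * χ (r ^ 2) := by
          refine Fintype.sum_congr _ _ fun r => ?_
          rw [ht, zero_sub, neg_eq_neg_one_mul r, map_mul, sq, map_mul]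
          ring
      _ = χ (-1) * (Fintype.card F - 1) := by rw [← mul_sum, sum_quadraticChar_sq]
  · calc ∑ r, χ r * χ (t - r) = ∑ x, χ (t * x) * χ (t - t * x) :=
          (Fintype.sum_equiv (Equiv.mulLeft₀ t ht) _ _ fun x => rfl).symm
      _ = ∑ x, χ x * χ (1 - x) := by
          refine Fintype.sum_congr _ _ fun x => ?_
          rw [← mul_one_sub, map_mul, map_mul]
          linear_combination (χ x * χ (1 - x)) * quadraticChar_sq_one ht
      _ = -χ (-1) := by
          have := jacobiSum_nontrivial_inv (quadraticChar_ne_one hF)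
          rwa [(quadraticChar_isQuadratic F).inv] at this

lemma card_binary_quadratic_eq (hF : ringChar F ≠ 2) {b c : F} (hb : b ≠ 0) (hc : c ≠ 0)
    (t : F) :
    (Nat.card {w : F × F // b * w.1 ^ 2 + c * w.2 ^ 2 = t} : ℤ) =
      Fintype.card F + quadraticChar F (-(b * c)) *
        (if t = 0 then (Fintype.card F - 1 : ℤ) else -1) := by
  set χ := quadraticChar F
  have shift : ∑ r, χ (t - r) = 0 :=
    (Fintype.sum_equiv (Equiv.subLeft t) _ χ fun _ => rfl).trans (quadraticChar_sum_zero hF)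
  have hneg : χ (-(b * c)) = χ (-1) * χ b * χ c := by
    rw [neg_eq_neg_one_mul, map_mul, map_mul, mul_assoc]
  rw [Nat.card_add_eq_sum_mul (fun u => b * u ^ 2) (fun v => c * v ^ 2)]
  push_cast
  simp only [card_mul_sq_eq hF hb, card_mul_sq_eq hF hc, map_mul]
  calc ∑ r, (χ b * χ r + 1) * (χ c * χ (t - r) + 1)
      = χ b * χ c * ∑ r, χ r * χ (t - r) + χ b * ∑ r, χ r + χ c * ∑ r, χ (t - r)
          + Fintype.card F := by
        have hq : (Fintype.card F : ℤ) = ∑ _r : F, 1 := by simp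
        simp only [hq, mul_sum, ← sum_add_distrib]
        exact Fintype.sum_congr _ _ fun r => by ring
    _ = _ := by
        rw [sum_quadraticChar_mul_sub hF, quadraticChar_sum_zero hF, shift, hneg]
        split_ifs <;> ring

lemma card_add_binary_quadratic_eq (hF : ringChar F ≠ 2) {α : Type*} [Fintype α] {b c : F}
    (hb : b ≠ 0) (hc : c ≠ 0) (Q : α → F) :
    (Nat.card {w : α × (F × F) // Q w.1 + (b * w.2.1 ^ 2 + c * w.2.2 ^ 2) = 0} : ℤ) =
      Fintype.card F * Fintype.card α + quadraticChar F (-(b * c)) *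
        (Fintype.card F * Nat.card {z // Q z = 0} - Fintype.card α) := by
  classical
  have hite : ∀ z, (if 0 - Q z = 0 then (Fintype.card F - 1 : ℤ) else -1) =
      Fintype.card F * (if Q z = 0 then 1 else 0) - 1 := fun z => by
    simp only [zero_sub, neg_eq_zero]
    split_ifs <;> ring
  rw [Nat.card_add_eq_sum Q fun w : F × F => b * w.1 ^ 2 + c * w.2 ^ 2, Nat.cast_sum]
  simp only [card_binary_quadratic_eq hF hb hc, hite]
  simp only [sum_add_distrib, ← mul_sum, sum_sub_distrib, sum_boole, sum_const, card_univ,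
    Nat.card_eq_fintype_card, Fintype.card_subtype]
  ring

lemma card_diag_succ_succ (hF : ringChar F ≠ 2) {n : ℕ} (a : Fin (n + 2) → F)
    (ha0 : a 0 ≠ 0) (ha1 : a 1 ≠ 0) :
    (Nat.card {x : Fin (n + 2) → F // ∑ i, a i * x i ^ 2 = 0} : ℤ) =
      Fintype.card F ^ (n + 1) + quadraticChar F (-(a 0 * a 1)) *
        (Fintype.card F * Nat.card {z : Fin n → F // ∑ i, a i.succ.succ * z i ^ 2 = 0} -
          Fintype.card F ^ n) := by
  let e : (Fin n → F) × (F × F) ≃ (Fin (n + 2) → F) :=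
    (Equiv.prodComm _ _).trans <| (Equiv.prodAssoc F F _).trans <|
      ((Equiv.refl F).prodCongr (Fin.consEquiv fun _ => F)).trans (Fin.consEquiv fun _ => F)
  have he : ∀ w, (∑ i, a i.succ.succ * w.1 i ^ 2) + (a 0 * w.2.1 ^ 2 + a 1 * w.2.2 ^ 2) = 0 ↔
      ∑ i, a i * e w i ^ 2 = 0 := fun w => by
    simp only [e, Fin.consEquiv, Equiv.trans_apply, Equiv.prodComm_apply, Equiv.prodAssoc_apply,
      Prod.fst_swap, Prod.snd_swap, Equiv.prodCongr_apply, Equiv.coe_refl, Equiv.coe_fn_mk,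
      Prod.map_apply, id_eq, Fin.sum_univ_succ, Fin.cons_zero, Fin.cons_succ, Fin.succ_zero_eq_one]
    rw [add_comm, add_assoc]
  rw [← Nat.card_congr (e.subtypeEquiv he),
    card_add_binary_quadratic_eq hF ha0 ha1 fun z : Fin n → F => ∑ i, a i.succ.succ * z i ^ 2,
    Fintype.card_fun, Fintype.card_fin]
  push_cast
  ring

lemma mul_card_diag_eq (hF : ringChar F ≠ 2) :
    ∀ {n : ℕ} (a : Fin n → F), Even n → (∀ i, a i ≠ 0) →
    Fintype.card F * (Nat.card {x : Fin n → F // ∑ i, a i * x i ^ 2 = 0} : ℤ) =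
      Fintype.card F ^ n + quadraticChar F ((-1) ^ (n / 2) * ∏ i, a i) *
        (Fintype.card F ^ (n / 2 + 1) - Fintype.card F ^ (n / 2))
  | 0, a, _, _ => by simp
  | 1, _, h, _ => absurd h Nat.not_even_one
  | n + 2, a, hn, ha => by
    have ih := mul_card_diag_eq hF (fun i => a i.succ.succ) ((Nat.even_add.mp hn).mpr even_two)
      fun i => ha _
    have hprod : (-1) ^ (n / 2 + 1) * ∏ i, a i =
        -(a 0 * a 1) * ((-1) ^ (n / 2) * ∏ i : Fin n, a i.succ.succ) := by
      rw [Fin.prod_univ_succ, Fin.prod_univ_succ, Fin.succ_zero_eq_one]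
      ring
    rw [card_diag_succ_succ hF a (ha 0) (ha 1), Nat.add_div_right n two_pos, hprod, map_mul]
    linear_combination (quadraticChar F (-(a 0 * a 1)) * Fintype.card F) * ih

lemma card_diag_eq (hF : ringChar F ≠ 2) {n : ℕ} (a : Fin n → F) (hn : Even n) (hn0 : 0 < n)
    (ha : ∀ i, a i ≠ 0) :
    (Nat.card {x : Fin n → F // ∑ i, a i * x i ^ 2 = 0} : ℤ) =
      Fintype.card F ^ (n - 1) + quadraticChar F ((-1) ^ (n / 2) * ∏ i, a i) *
        (Fintype.card F ^ (n / 2) - Fintype.card F ^ (n / 2 - 1)) := by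
  have hq : (Fintype.card F : ℤ) ≠ 0 := Nat.cast_ne_zero.mpr Fintype.card_ne_zero
  refine mul_left_cancel₀ hq ?_
  rw [mul_card_diag_eq hF a hn ha]
  have hhalf : 1 ≤ n / 2 := by
    obtain ⟨k, rfl⟩ := hn
    omega
  have hpow : ∀ k, 1 ≤ k →
      (Fintype.card F : ℤ) ^ k = Fintype.card F * Fintype.card F ^ (k - 1) :=
    fun k hk => by rw [← pow_succ', Nat.sub_add_cancel hk]
  rw [hpow n hn0, pow_succ, hpow (n / 2) hhalf]
  ring

end FiniteField

/-- (Joly) For a non-degenerate diagonal quadratic form `∑ aᵢXᵢ²` over `F_p`, `p` odd,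
in an even number `n` of variables, the number of zeros in `F_pⁿ` is
`p^{n−1} ± (p^{n/2} − p^{n/2−1})`, with sign according to whether
`(−1)^{n/2}a₁⋯aₙ` is a (nonzero) square in `F_p`. -/
theorem joly_even_n (p : ℕ) [Fact p.Prime] (hodd : Odd p)
    (n : ℕ) (hn : Even n) (a : Fin n → ZMod p) (ha : ∀ i, a i ≠ 0) :
    Nat.card {x : Fin n → ZMod p // ∑ i, a i * (x i) ^ 2 = 0} =
      if IsSquare ((-1 : ZMod p) ^ (n / 2) * ∏ i, a i) then
        p ^ (n - 1) + (p ^ (n / 2) - p ^ (n / 2 - 1))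
      else
        p ^ (n - 1) - (p ^ (n / 2) - p ^ (n / 2 - 1)) := by
  obtain rfl | hn0 := Nat.eq_zero_or_pos n
  · simp
  have hF : ringChar (ZMod p) ≠ 2 := by
    rw [ZMod.ringChar_zmod_n]
    rintro rfl
    exact Nat.not_odd_iff_even.mpr even_two hodd
  have hD : (-1 : ZMod p) ^ (n / 2) * ∏ i, a i ≠ 0 :=
    mul_ne_zero (pow_ne_zero _ (neg_ne_zero.mpr one_ne_zero)) (prod_ne_zero_iff.mpr fun i _ => ha i)
  have key := card_diag_eq hF a hn hn0 ha
  rw [ZMod.card] at key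
  have hp : 1 ≤ p := (Fact.out : p.Prime).one_lt.le
  have hle : p ^ (n / 2 - 1) ≤ p ^ (n / 2) := Nat.pow_le_pow_right hp (Nat.sub_le _ _)
  have hle' : p ^ (n / 2) - p ^ (n / 2 - 1) ≤ p ^ (n - 1) :=
    (Nat.sub_le _ _).trans (Nat.pow_le_pow_right hp (by omega))
  split_ifs with hsq
  · rw [(quadraticChar_one_iff_isSquare hD).mpr hsq] at key
    zify [hle]
    linarith
  · rw [quadraticChar_neg_one_iff_not_isSquare.mpr hsq] at key
    zify [hle, hle']
    linarith
end

section
/- Let p be an odd prime, q a power of p, and e₁, e₂ ∈ F_q*. The curves D_{e₁}: Y^p − Y = e₁X² and D_{e₂}: Y^p − Y = e₂X² are related by an F_q-isomorphism of the form (x,y) ↦ (ν₀x, ν₂y + ν₃) fixing infinity if and only if e₁/e₂ is a product of a square in F_q* and an element of F_p*. -/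
/-!
Write `℘ y = y ^ p - y`. Over the algebraic closure every value of `℘` is `e₁ x²` for some `x`,
so `(x, y) ↦ (ν₀ x, ν₂ y + ν₃)` maps `D_{e₁}` into `D_{e₂}` iff `℘ (ν₂ y + ν₃) = (e₂ ν₀² / e₁) ℘ y`
for all `y`. As `℘ (ν₂ y + ν₃) = ν₂ ^ p y ^ p + ν₃ ^ p - ν₂ y - ν₃`, evaluating at `y = 0`, `y = 1`
and a root of `℘ y = 1` shows this holds iff `ν₃, ν₂ ∈ 𝔽_p` and `ν₂ = e₂ ν₀² / e₁`, i.e.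
`e₁ / e₂ = ν₀² ν₂⁻¹` with `ν₂⁻¹ ∈ 𝔽_p*`.
-/

open Polynomial

theorem IsAlgClosed.exists_pow_sub_self_eq {L : Type*} [Field L] [IsAlgClosed L] {n : ℕ}
    (hn : 1 < n) (a : L) : ∃ y : L, y ^ n - y = a := by
  have hdeg := FiniteField.X_pow_card_sub_X_natDegree_eq L hn
  obtain ⟨y, hy⟩ := IsAlgClosed.eval_surjective (p := (X ^ n - X : L[X])) (by omega) a
  exact ⟨y, by simpa using hy⟩

section

variable {p : ℕ} [Fact p.Prime]

theorem pow_eq_self_iff_mem_range_algebraMap {F : Type*} [Field F] [Algebra (ZMod p) F] {x : F} :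
    x ^ p = x ↔ x ∈ Set.range (algebraMap (ZMod p) F) := by
  have : CharP F p := charP_of_injective_algebraMap (algebraMap (ZMod p) F).injective p
  rw [← Subfield.mem_bot_iff_pow_eq_self F p, ← ZMod.fieldRange_castHom_eq_bot p,
    RingHom.mem_fieldRange, Subsingleton.elim (ZMod.castHom dvd_rfl F) (algebraMap (ZMod p) F)]
  rfl

variable {L : Type*} [Field L] [IsAlgClosed L] [CharP L p]

theorem forall_affine_artinSchreier_iff (a b c : L) :
    (∀ y : L, (a * y + b) ^ p - (a * y + b) = c * (y ^ p - y)) ↔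
      a ^ p = a ∧ b ^ p = b ∧ a = c := by
  have expand (y : L) : (a * y + b) ^ p = a ^ p * y ^ p + b ^ p := by
    rw [add_pow_char, mul_pow]
  constructor
  · intro h
    have hb : b ^ p = b := by
      have := h 0
      rw [expand, zero_pow (Fact.out : p.Prime).ne_zero] at this
      linear_combination this
    have ha : a ^ p = a := by
      have := h 1
      rw [expand, hb, one_pow] at this
      linear_combination this
    obtain ⟨y, hy⟩ := IsAlgClosed.exists_pow_sub_self_eq (Fact.out : p.Prime).one_lt (1 : L)
    have := h y
    rw [expand, ha, hb] at this
    exact ⟨ha, hb, by linear_combination this - (a - c) * hy⟩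
  · rintro ⟨ha, hb, rfl⟩ y
    rw [expand, ha, hb]
    ring

theorem artinSchreier_curve_map_iff {e₁ : L} (he₁ : e₁ ≠ 0) (e₂ a b n : L) :
    (∀ x y : L, y ^ p - y = e₁ * x ^ 2 → (a * y + b) ^ p - (a * y + b) = e₂ * (n * x) ^ 2) ↔
      a ^ p = a ∧ b ^ p = b ∧ a = e₂ * n ^ 2 / e₁ := by
  rw [← forall_affine_artinSchreier_iff]
  constructor
  · intro h y
    obtain ⟨x, hx⟩ := IsAlgClosed.exists_pow_nat_eq ((y ^ p - y) / e₁) two_pos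
    rw [h x y (by rw [hx, mul_div_cancel₀ _ he₁]), mul_pow, hx]
    ring
  · intro h x y hxy
    rw [h, hxy]
    field_simp

theorem exists_sq_mul_algebraMap_iff {F : Type*} [Field F] [Algebra (ZMod p) F] {e₁ e₂ : F}
    (he₁ : e₁ ≠ 0) (he₂ : e₂ ≠ 0) :
    (∃ ν₀ ν₂ : F, ν₀ ≠ 0 ∧ ν₂ ≠ 0 ∧ ν₂ ^ p = ν₂ ∧ ν₂ = e₂ * ν₀ ^ 2 / e₁) ↔
      ∃ s : F, s ≠ 0 ∧ ∃ t : ZMod p, t ≠ 0 ∧ e₁ / e₂ = s ^ 2 * algebraMap (ZMod p) F t := by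
  simp_rw [pow_eq_self_iff_mem_range_algebraMap]
  constructor
  · rintro ⟨s, -, hs, ht, ⟨t, rfl⟩, h⟩
    refine ⟨s, hs, t⁻¹, by simpa using ht, ?_⟩
    rw [map_inv₀, h]
    field_simp
  · rintro ⟨s, hs, t, ht, h⟩
    have ht' : algebraMap (ZMod p) F t ≠ 0 := by simpa using ht
    refine ⟨s, _, hs, inv_ne_zero ht', ⟨t⁻¹, map_inv₀ _ t⟩, ?_⟩
    rw [div_eq_iff he₂] at h
    rw [h]
    field_simp

end

theorem De_isomorphic_iff_general (p : ℕ) [Fact p.Prime] (m : ℕ)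
    (e₁ e₂ : GaloisField p m) (he₁ : e₁ ≠ 0) (he₂ : e₂ ≠ 0) :
    (∃ ν₀ ν₂ ν₃ : GaloisField p m, ν₀ ≠ 0 ∧ ν₂ ≠ 0 ∧
      ∀ x y : AlgebraicClosure (GaloisField p m),
        y ^ p - y = algebraMap (GaloisField p m) (AlgebraicClosure (GaloisField p m)) e₁ * x ^ 2 →
        (algebraMap (GaloisField p m) (AlgebraicClosure (GaloisField p m)) ν₂ * y +
            algebraMap (GaloisField p m) (AlgebraicClosure (GaloisField p m)) ν₃) ^ p -
          (algebraMap (GaloisField p m) (AlgebraicClosure (GaloisField p m)) ν₂ * y +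
            algebraMap (GaloisField p m) (AlgebraicClosure (GaloisField p m)) ν₃) =
        algebraMap (GaloisField p m) (AlgebraicClosure (GaloisField p m)) e₂ *
          (algebraMap (GaloisField p m) (AlgebraicClosure (GaloisField p m)) ν₀ * x) ^ 2)
    ↔ ∃ s : GaloisField p m, s ≠ 0 ∧ ∃ t : ZMod p, t ≠ 0 ∧
        e₁ / e₂ = s ^ 2 * algebraMap (ZMod p) (GaloisField p m) t := by
  set φ := algebraMap (GaloisField p m) (AlgebraicClosure (GaloisField p m))
  simp_rw [artinSchreier_curve_map_iff (p := p) ((map_ne_zero φ).mpr he₁), ← map_pow, ← map_mul,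
    ← map_div₀, φ.injective.eq_iff, ← exists_sq_mul_algebraMap_iff he₁ he₂]
  exact ⟨fun ⟨ν₀, ν₂, _, h₀, h₂, hν₂, _, h⟩ => ⟨ν₀, ν₂, h₀, h₂, hν₂, h⟩,
    fun ⟨ν₀, ν₂, h₀, h₂, hν₂, h⟩ =>
      ⟨ν₀, ν₂, 0, h₀, h₂, hν₂, zero_pow (Fact.out : p.Prime).ne_zero, h⟩⟩

/-- The curves `D_{e₁} : Y^p − Y = e₁X²` and `D_{e₂} : Y^p − Y = e₂X²` over `F_q`
are related by an `F_q`-isomorphism of the form `(x,y) ↦ (ν₀x, ν₂y + ν₃)` fixing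
infinity if and only if `e₁/e₂` is the product of a square in `F_q*` with an
element of `F_p*`. -/
theorem De_isomorphic_iff (p : ℕ) [Fact p.Prime] (hodd : Odd p) (m : ℕ) (hm : 1 ≤ m)
    (e₁ e₂ : GaloisField p m) (he₁ : e₁ ≠ 0) (he₂ : e₂ ≠ 0) :
    (∃ ν₀ ν₂ ν₃ : GaloisField p m, ν₀ ≠ 0 ∧ ν₂ ≠ 0 ∧
      ∀ x y : AlgebraicClosure (GaloisField p m),
        y ^ p - y = algebraMap (GaloisField p m) (AlgebraicClosure (GaloisField p m)) e₁ * x ^ 2 →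
        (algebraMap (GaloisField p m) (AlgebraicClosure (GaloisField p m)) ν₂ * y +
            algebraMap (GaloisField p m) (AlgebraicClosure (GaloisField p m)) ν₃) ^ p -
          (algebraMap (GaloisField p m) (AlgebraicClosure (GaloisField p m)) ν₂ * y +
            algebraMap (GaloisField p m) (AlgebraicClosure (GaloisField p m)) ν₃) =
        algebraMap (GaloisField p m) (AlgebraicClosure (GaloisField p m)) e₂ *
          (algebraMap (GaloisField p m) (AlgebraicClosure (GaloisField p m)) ν₀ * x) ^ 2)
    ↔ ∃ s : GaloisField p m, s ≠ 0 ∧ ∃ t : ZMod p, t ≠ 0 ∧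
        e₁ / e₂ = s ^ 2 * algebraMap (ZMod p) (GaloisField p m) t :=
  De_isomorphic_iff_general p m e₁ e₂ he₁ he₂
end

section
/- Let p ≡ 3 (mod 4) be a prime. Then every nonzero element z ∈ F_{p²} with Tr_{F_{p²}/F_p}(z) = 0 is a square in F_{p²}*, and consequently the number of F_{p²}-points on the affine curve Y^p − Y = X² with x ≠ 0 is (p−1)·2p; in total the projective curve has 1 + p² + (p−1)p points over F_{p²}. -/
/-!
By Euler's criterion a nonzero `z ∈ 𝔽_{p²}` is a square iff `z ^ ((p² - 1) / 2) = 1`. A nonzero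
trace-zero `z` satisfies `z ^ (p - 1) = -1`, and `(p² - 1) / 2 = (p - 1) · (p + 1) / 2` with
`(p + 1) / 2` even when `p ≡ 3 (mod 4)`, so `z` is a square. Every `y ^ p - y` has trace zero,
hence `x ^ 2 = y ^ p - y` has two solutions `x` unless `y ∈ 𝔽_p`, where it has only `x = 0`;
summing over `y` gives the point counts.
-/

open Finset

section Squares

variable {F : Type*} [Field F] [DecidableEq F]

theorem ncard_sq_eq_of_isSquare (hF : ringChar F ≠ 2) {a : F} (ha : IsSquare a) :
    {x : F | x ^ 2 = a}.ncard = if a = 0 then 1 else 2 := by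
  obtain ⟨w, rfl⟩ := ha
  split_ifs with h
  · simp [h]
  · have hw : w ≠ -w := fun h' =>
      h (by rw [mul_self_eq_zero, ← Ring.eq_self_iff_eq_zero_of_char_ne_two hF, ← h'])
    have hroots : {x : F | x ^ 2 = w * w} = {w, -w} := by
      ext x; simp [← sq, sq_eq_sq_iff_eq_or_eq_neg]
    rw [hroots, Set.ncard_pair hw]

theorem ncard_sq_eq_of_isSquare_of_ne_zero (hF : ringChar F ≠ 2) {a : F} (ha : IsSquare a) :
    {x : F | x ^ 2 = a ∧ x ≠ 0}.ncard = if a = 0 then 0 else 2 := by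
  split_ifs with h
  · simp [h]
  · have hsqrt : {x : F | x ^ 2 = a ∧ x ≠ 0} = {x : F | x ^ 2 = a} := by
      ext x
      exact and_iff_left_of_imp fun hx hx0 => h (by rw [← hx, hx0, sq, zero_mul])
    rw [hsqrt, ncard_sq_eq_of_isSquare hF ha, if_neg h]

end Squares

theorem Nat.card_subtype_prod_eq_sum {α β : Type*} [Fintype β] [Finite α] (P : α → β → Prop) :
    Nat.card {w : α × β // P w.1 w.2} = ∑ b, Nat.card {a // P a b} :=
  (Nat.card_congr (((Equiv.prodComm α β).subtypeEquiv fun _ => Iff.rfl).trans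
    (Equiv.subtypeProdEquivSigmaSubtype fun b a => P a b))).trans Nat.card_sigma

section FiberCount

variable {F : Type*} [Field F] [Fintype F] [DecidableEq F]

theorem card_sq_eq_add_card_eq_zero (hF : ringChar F ≠ 2) (f : F → F)
    (hf : ∀ y, IsSquare (f y)) :
    Nat.card {w : F × F // f w.2 = w.1 ^ 2} + Nat.card {y // f y = 0} = 2 * Fintype.card F := by
  have hfib (y : F) : Nat.card {x // f y = x ^ 2} = if f y = 0 then 1 else 2 :=
    (Nat.card_congr (Equiv.subtypeEquivRight fun _ => eq_comm)).trans
      (ncard_sq_eq_of_isSquare hF (hf y))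
  rw [Nat.card_subtype_prod_eq_sum (fun x y => f y = x ^ 2)]
  simp_rw [hfib, Finset.sum_ite, sum_const, smul_eq_mul, Nat.card_eq_fintype_card,
    Fintype.card_subtype, ← card_univ]
  have := card_filter_add_card_filter_not (s := univ) (fun y => f y = 0)
  omega

theorem card_sq_eq_ne_zero_add_card_eq_zero (hF : ringChar F ≠ 2) (f : F → F)
    (hf : ∀ y, IsSquare (f y)) :
    Nat.card {w : F × F // f w.2 = w.1 ^ 2 ∧ w.1 ≠ 0} + 2 * Nat.card {y // f y = 0} =
      2 * Fintype.card F := by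
  have hfib (y : F) : Nat.card {x // f y = x ^ 2 ∧ x ≠ 0} = if f y = 0 then 0 else 2 :=
    (Nat.card_congr (Equiv.subtypeEquivRight fun _ => and_congr_left' eq_comm)).trans
      (ncard_sq_eq_of_isSquare_of_ne_zero hF (hf y))
  rw [Nat.card_subtype_prod_eq_sum (fun x y => f y = x ^ 2 ∧ x ≠ 0)]
  simp_rw [hfib, Finset.sum_ite, sum_const, smul_eq_mul, Nat.card_eq_fintype_card,
    Fintype.card_subtype, ← card_univ]
  have := card_filter_add_card_filter_not (s := univ) (fun y => f y = 0)
  omega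

end FiberCount

section QuadraticExtension

variable {F : Type*} [Field F] [Fintype F] {p : ℕ}

theorem isSquare_of_pow_sub_one_eq_neg_one (hcard : Fintype.card F = p ^ 2) (hp : p % 4 = 3)
    {z : F} (hz : z ^ (p - 1) = -1) : IsSquare z := by
  have hF : ringChar F ≠ 2 := by
    have hodd : p ^ 2 % 2 = 1 := by rw [Nat.pow_mod, show p % 2 = 1 by omega]
    rw [Ne, FiniteField.even_card_iff_char_two, hcard]
    omega
  have hz0 : z ≠ 0 := by
    rintro rfl
    rw [zero_pow (by omega)] at hz
    exact zero_ne_one (neg_eq_zero.mp hz.symm).symm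
  -- `(p² - 1) / 2 = (p - 1) · ((p + 1) / 2)`, and `(p + 1) / 2` is even.
  have hhalf : Fintype.card F / 2 = (p - 1) * (2 * ((p + 1) / 4)) := by
    obtain ⟨k, hk⟩ : ∃ k, p = 4 * k + 3 := ⟨p / 4, by omega⟩
    have hsq : p ^ 2 = 2 * ((4 * k + 2) * (2 * (k + 1))) + 1 := by rw [hk]; ring
    rw [hcard, hsq, show p - 1 = 4 * k + 2 by omega, show (p + 1) / 4 = k + 1 by omega]
    omega
  rw [FiniteField.isSquare_iff hF hz0, hhalf, pow_mul, hz, pow_mul, neg_one_sq, one_pow]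

theorem isSquare_of_add_pow_eq_zero (hcard : Fintype.card F = p ^ 2) (hp : p % 4 = 3)
    {z : F} (hz : z ≠ 0) (htr : z + z ^ p = 0) : IsSquare z := by
  refine isSquare_of_pow_sub_one_eq_neg_one hcard hp (mul_right_cancel₀ hz ?_)
  rw [← pow_succ, Nat.sub_add_cancel (by omega), neg_one_mul]
  exact eq_neg_of_add_eq_zero_right htr

theorem pow_sub_self_add_pow_eq_zero [Fact p.Prime] [CharP F p]
    (hcard : Fintype.card F = p ^ 2) (y : F) : (y ^ p - y) + (y ^ p - y) ^ p = 0 := by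
  rw [sub_pow_char, ← pow_mul, ← sq, ← hcard, FiniteField.pow_card, sub_add_sub_cancel', sub_self]

theorem isSquare_pow_sub_self [Fact p.Prime] [CharP F p] (hcard : Fintype.card F = p ^ 2)
    (hp : p % 4 = 3) (y : F) : IsSquare (y ^ p - y) := by
  by_cases hy : y ^ p - y = 0
  · exact hy ▸ IsSquare.zero
  · exact isSquare_of_add_pow_eq_zero hcard hp hy (pow_sub_self_add_pow_eq_zero hcard y)

end QuadraticExtension

theorem Nat.card_pow_char_eq_self (F : Type*) [Field F] (p : ℕ) [Fact p.Prime] [CharP F p] :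
    Nat.card {y : F // y ^ p = y} = p := by
  simp_rw [← Subfield.mem_bot_iff_pow_eq_self F p]
  exact Subfield.card_bot F p

/-- For `p ≡ 3 (mod 4)`: every nonzero trace-zero element of `F_{p²}` is a square,
the number of affine `F_{p²}`-points of `Y^p − Y = X²` with `x ≠ 0` is `(p−1)·2p`, and
the projective curve has `1 + p² + (p−1)p` points over `F_{p²}`. -/
theorem point_count_p_three_mod_four (p : ℕ) [Fact p.Prime] (hp4 : p % 4 = 3) :
    (∀ z : GaloisField p 2, z ≠ 0 → z + z ^ p = 0 → IsSquare z) ∧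
    Nat.card {w : GaloisField p 2 × GaloisField p 2 //
        w.2 ^ p - w.2 = w.1 ^ 2 ∧ w.1 ≠ 0} = (p - 1) * (2 * p) ∧
    1 + Nat.card {w : GaloisField p 2 × GaloisField p 2 //
        w.2 ^ p - w.2 = w.1 ^ 2} = 1 + p ^ 2 + (p - 1) * p := by
  classical
  let _ : Fintype (GaloisField p 2) := Fintype.ofFinite _
  have hcard : Fintype.card (GaloisField p 2) = p ^ 2 := by
    rw [Fintype.card_eq_nat_card, GaloisField.card p 2 two_ne_zero]
  have hF : ringChar (GaloisField p 2) ≠ 2 := by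
    rw [ringChar.eq (GaloisField p 2) p]
    omega
  have hsq := isSquare_pow_sub_self hcard hp4
  have hfix : Nat.card {y : GaloisField p 2 // y ^ p - y = 0} = p := by
    simp_rw [sub_eq_zero]
    exact Nat.card_pow_char_eq_self _ p
  have hall := card_sq_eq_add_card_eq_zero hF _ hsq
  have hoff := card_sq_eq_ne_zero_add_card_eq_zero hF _ hsq
  rw [hfix, hcard] at hall hoff
  have hp : (p - 1) * p + p = p ^ 2 := by
    rw [Nat.sub_one_mul, sq, Nat.sub_add_cancel (Nat.le_mul_self p)]
  refine ⟨fun _ => isSquare_of_add_pow_eq_zero hcard hp4, ?_, ?_⟩ <;>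
    linarith [show (p - 1) * (2 * p) = 2 * ((p - 1) * p) by ring]
end

section
/- Let p ≡ 1 (mod 4) be a prime. Then no nonzero element z ∈ F_{p²} with Tr_{F_{p²}/F_p}(z) = 0 is a square in F_{p²}*, and the smooth projective curve Y^p − Y = X² has exactly 1 + p² − (p−1)p points over F_{p²}. -/
/-!
If `z ≠ 0` and `z + z ^ p = 0` then `z ^ (p - 1) = -1`, so
`z ^ ((p² - 1) / 2) = (-1) ^ ((p + 1) / 2) = -1` because `(p + 1) / 2` is odd, and by Euler's
criterion `z` is not a square in `F_{p²}`.
On the curve, `y ^ p - y` has trace `y ^ (p²) - y = 0`, so the square `x²` has trace zero and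
hence `x = 0`; then `y ^ p = y`, leaving the `p` affine points `(0, y)` with `y ∈ F_p`.
-/

open Polynomial

theorem pow_sq_div_two_eq_neg_one {M : Type*} [Monoid M] [HasDistribNeg M] {p : ℕ}
    (hp : p % 4 = 1) {z : M} (hz : z ^ (p - 1) = -1) : z ^ (p ^ 2 / 2) = -1 := by
  obtain ⟨k, rfl⟩ : ∃ k, p = 4 * k + 1 := ⟨p / 4, by omega⟩
  have hexp : (4 * k + 1) ^ 2 / 2 = (4 * k + 1 - 1) * (2 * k + 1) := by
    have hsq : (4 * k + 1) ^ 2 = 2 * ((4 * k) * (2 * k + 1)) + 1 := by ring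
    rw [hsq, Nat.add_sub_cancel]
    omega
  rw [hexp, pow_mul, hz, Odd.neg_one_pow ⟨k, rfl⟩]

theorem pow_sub_one_eq_neg_one_of_add_pow_eq_zero {F : Type*} [Field F] {p : ℕ} (hp : p ≠ 0)
    {z : F} (hz : z ≠ 0) (htr : z + z ^ p = 0) : z ^ (p - 1) = -1 := by
  apply mul_left_cancel₀ hz
  rw [← pow_succ', Nat.sub_add_cancel (Nat.one_le_iff_ne_zero.mpr hp)]
  linear_combination htr

theorem not_isSquare_of_add_pow_eq_zero {F : Type*} [Field F] [Fintype F] {p : ℕ}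
    (hF : Fintype.card F = p ^ 2) (hp : p % 4 = 1) {z : F} (hz : z ≠ 0) (htr : z + z ^ p = 0) :
    ¬ IsSquare z := by
  have hchar : ringChar F ≠ 2 := by
    rw [Ne, FiniteField.even_card_iff_char_two, hF, Nat.pow_mod]
    simp [show p % 2 = 1 by omega]
  rw [FiniteField.isSquare_iff hchar hz, hF,
    pow_sq_div_two_eq_neg_one hp (pow_sub_one_eq_neg_one_of_add_pow_eq_zero (by omega) hz htr)]
  exact Ring.neg_one_ne_one_of_char_ne_two hchar

theorem pow_char_sub_self_add_pow_char_eq_zero {F : Type*} [Field F] [Fintype F] {p : ℕ}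
    [ExpChar F p] (hF : Fintype.card F = p ^ 2) (y : F) : (y ^ p - y) + (y ^ p - y) ^ p = 0 := by
  have hfrob : (y ^ p) ^ p = y := by rw [← pow_mul, ← sq, ← hF, FiniteField.pow_card]
  rw [sub_pow_expChar, hfrob]
  ring

theorem eq_zero_of_pow_char_sub_self_eq_sq {F : Type*} [Field F] [Fintype F] {p : ℕ} [ExpChar F p]
    (hF : Fintype.card F = p ^ 2) (hp : p % 4 = 1) {x y : F} (h : y ^ p - y = x ^ 2) : x = 0 := by
  by_contra hx
  refine not_isSquare_of_add_pow_eq_zero hF hp (pow_ne_zero 2 hx) ?_ ⟨x, sq x⟩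
  rw [← h]
  exact pow_char_sub_self_add_pow_char_eq_zero hF y

theorem card_solutions_pow_char_eq_self (p : ℕ) [Fact p.Prime] (K : Type*) [Field K] [CharP K p] :
    Nat.card {y : K // y ^ p = y} = p := by
  let := ZMod.algebra K p
  have hroots : (X ^ p - X : (ZMod p)[X]).rootSet K = {y | y ^ p = y} := by
    ext y
    rw [mem_rootSet_of_ne (FiniteField.X_pow_card_sub_X_ne_zero _ (Fact.out : p.Prime).one_lt)]
    simp [sub_eq_zero]
  rw [← Set.coe_ofPred, ← hroots, Nat.card_eq_fintype_card,
    card_rootSet_eq_natDegree (galois_poly_separable p p dvd_rfl)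
      ((GaloisField.splits_zmod_X_pow_sub_X p).map _),
    FiniteField.X_pow_card_sub_X_natDegree_eq _ (Fact.out : p.Prime).one_lt]

theorem card_solutions_pow_char_sub_self_eq_sq (p : ℕ) [Fact p.Prime] {F : Type*} [Field F]
    [Fintype F] [CharP F p] (hF : Fintype.card F = p ^ 2) (hp : p % 4 = 1) :
    Nat.card {w : F × F // w.2 ^ p - w.2 = w.1 ^ 2} = p := by
  have hx (w : {w : F × F // w.2 ^ p - w.2 = w.1 ^ 2}) : w.1.1 = 0 :=
    eq_zero_of_pow_char_sub_self_eq_sq hF hp w.2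
  refine (Nat.card_congr ?_).trans (card_solutions_pow_char_eq_self p F)
  exact
    { toFun w := ⟨w.1.2, by simpa [hx w, sub_eq_zero] using w.2⟩
      invFun y := ⟨(0, y.1), by simp [y.2]⟩
      left_inv w := Subtype.ext (Prod.ext (hx w).symm rfl)
      right_inv y := rfl }

/-- For `p ≡ 1 (mod 4)`: no nonzero trace-zero element of `F_{p²}` is a square, and
the smooth projective curve `Y^p − Y = X²` has exactly `1 + p² − (p−1)p` points over
`F_{p²}`. -/
theorem point_count_p_one_mod_four (p : ℕ) [Fact p.Prime] (hp4 : p % 4 = 1) :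
    (∀ z : GaloisField p 2, z ≠ 0 → z + z ^ p = 0 → ¬ IsSquare z) ∧
    1 + Nat.card {w : GaloisField p 2 × GaloisField p 2 //
        w.2 ^ p - w.2 = w.1 ^ 2} = 1 + p ^ 2 - (p - 1) * p := by
  have : Fintype (GaloisField p 2) := Fintype.ofFinite _
  have hcard : Fintype.card (GaloisField p 2) = p ^ 2 := by
    rw [← Nat.card_eq_fintype_card, GaloisField.card p 2 two_ne_zero]
  refine ⟨fun z hz htr => not_isSquare_of_add_pow_eq_zero hcard hp4 hz htr, ?_⟩
  rw [card_solutions_pow_char_sub_self_eq_sq p hcard hp4, Nat.sub_one_mul, ← sq]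
  have := Nat.le_self_pow two_ne_zero p
  omega
end
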